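/- arXiv:1810.08509 — 2 statements merged into one kernel-verified Lean document; each statement's English description precedes it below -/
import Mathlib

section
/- Let 0 < ε < t be real numbers and define π = (e^ε − 1)/(e^t − 1). Then 1 − π + e^{−t} · π > e^{−ε}. -/
/-!
Writing `π = (e^ε - 1)/(e^t - 1)`, the identity `(1 - e^{-t})/(e^t - 1) = e^{-t}` gives
`1 - π + e^{-t} π = 1 - e^{-t}(e^ε - 1)`. As `e^{-t} < e^{-ε}` and `e^ε - 1 > 0`, this exceeds
`1 - e^{-ε}(e^ε - 1) = e^{-ε}`.
-/

open Real

lemma Real.exp_neg_mul_exp_sub_one (t : ℝ) : exp (-t) * (exp t - 1) = 1 - exp (-t) := by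
  rw [mul_sub, ← exp_add, neg_add_cancel, exp_zero, mul_one]

lemma Real.one_sub_div_add_exp_neg_mul_div {t : ℝ} (ht : t ≠ 0) (a : ℝ) :
    1 - a / (exp t - 1) + exp (-t) * (a / (exp t - 1)) = 1 - exp (-t) * a := by
  have hden : exp t - 1 ≠ 0 := sub_ne_zero.mpr (mt (exp_eq_one_iff t).mp ht)
  have key : (1 - exp (-t)) * (a / (exp t - 1)) = exp (-t) * a := by
    rw [← exp_neg_mul_exp_sub_one, mul_assoc, mul_div_cancel₀ a hden]
  linear_combination -key

lemma Real.one_sub_exp_neg_mul_exp_sub_one (ε : ℝ) : 1 - exp (-ε) * (exp ε - 1) = exp (-ε) := by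
  rw [exp_neg_mul_exp_sub_one]; ring

theorem sample_inequality_lower (ε t : ℝ) (hε : 0 < ε) (hεt : ε < t) :
    1 - (Real.exp ε - 1) / (Real.exp t - 1) +
      Real.exp (-t) * ((Real.exp ε - 1) / (Real.exp t - 1)) > Real.exp (-ε) := by
  have hexp_lt : exp (-t) < exp (-ε) := exp_lt_exp.mpr (neg_lt_neg hεt)
  have hnum_pos : 0 < exp ε - 1 := sub_pos.mpr (one_lt_exp_iff.mpr hε)
  rw [one_sub_div_add_exp_neg_mul_div (hε.trans hεt).ne', gt_iff_lt]
  calc exp (-ε) = 1 - exp (-ε) * (exp ε - 1) := (one_sub_exp_neg_mul_exp_sub_one ε).symm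
    _ < 1 - exp (-t) * (exp ε - 1) := by gcongr
end

section
/- If the two neighboring rating matrices D and D′ differ only in entry (p,q) with |r_{pq} − r′_{pq}| ≤ Δ and the same support indicators I_{ij}, and V̄ minimizes the perturbed objectives for both with respective noise matrices [η_j] and [η′_j], then η_j = η′_j for all j ≠ q and ‖η_q − η′_q‖₂ = |r_{pq} − r′_{pq}| · ‖u_p‖₂ ≤ Δ whenever ‖u_p‖₂ ≤ 1. -/
/-- The perturbed PMF objective `Ẽ(V)` with user profiles `u` fixed. -/
noncomputable def perturbedObjective {d N M : ℕ}
    (u : Fin N → EuclideanSpace ℝ (Fin d)) (I : Fin N → Fin M → ℝ)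
    (r : Fin N → Fin M → ℝ) (lv : ℝ) (η : Fin M → EuclideanSpace ℝ (Fin d))
    (V : Fin M → EuclideanSpace ℝ (Fin d)) : ℝ :=
  (1 / 2) * ∑ i : Fin N, ∑ j : Fin M, I i j * (r i j - inner ℝ (u i) (V j)) ^ 2
    + (lv / 2) * ∑ j : Fin M, ‖V j‖ ^ 2
    + ∑ j : Fin M, (inner ℝ (η j) (V j) : ℝ)

/-!
Along a line `V̄ + t • W` the objective is exactly quadratic in `t`, with linear coefficient
`∑ j, ⟪∇_j Ẽ(V̄), W j⟫`. A real quadratic `t b + t² a` that is nonnegative for every `t` has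
`b = 0`, so at a minimizer every partial gradient
`∇_j Ẽ(V̄) = lv V̄_j + η_j - ∑ i, I_ij (r_ij - ⟪u_i, V̄_j⟫) u_i` vanishes. Subtracting the two
first-order conditions, all terms with `(i, j) ≠ (p, q)` cancel, leaving
`η_q - η'_q = (r_pq - r'_pq) u_p` and `η_j = η'_j` for `j ≠ q`.
-/

open Finset RealInnerProductSpace

lemma eq_zero_of_forall_mul_add_sq_nonneg {K : Type*} [Field K] [LinearOrder K]
    [IsStrictOrderedRing K] {a b : K} (h : ∀ t, 0 ≤ t * b + t ^ 2 * a) : b = 0 := by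
  have hdiscrim := discrim_le_zero (a := a) (b := b) (c := 0) fun t => by
    linarith [h t]
  rw [discrim, mul_zero, sub_zero] at hdiscrim
  exact pow_eq_zero_iff two_ne_zero |>.mp (le_antisymm hdiscrim (sq_nonneg b))

section
variable {d N M : ℕ} (u : Fin N → EuclideanSpace ℝ (Fin d)) (I : Fin N → Fin M → ℝ)
  (r : Fin N → Fin M → ℝ) (lv : ℝ) (η : Fin M → EuclideanSpace ℝ (Fin d))

noncomputable def perturbedObjectiveGrad (V : Fin M → EuclideanSpace ℝ (Fin d)) (j : Fin M) :
    EuclideanSpace ℝ (Fin d) :=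
  lv • V j + η j - ∑ i, (I i j * (r i j - ⟪u i, V j⟫)) • u i

lemma perturbedObjective_add_smul (V W : Fin M → EuclideanSpace ℝ (Fin d)) (t : ℝ) :
    perturbedObjective u I r lv η (V + t • W) =
      perturbedObjective u I r lv η V
        + t * ∑ j, ⟪perturbedObjectiveGrad u I r lv η V j, W j⟫
        + t ^ 2 * ((1 / 2) * ∑ i, ∑ j, I i j * ⟪u i, W j⟫ ^ 2 + (lv / 2) * ∑ j, ‖W j‖ ^ 2) := by
  have hgrad : ∑ j, ⟪perturbedObjectiveGrad u I r lv η V j, W j⟫ =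
      ∑ j, (lv * ⟪V j, W j⟫ + ⟪η j, W j⟫)
        - ∑ i, ∑ j, I i j * (r i j - ⟪u i, V j⟫) * ⟪u i, W j⟫ := by
    simp only [perturbedObjectiveGrad, inner_sub_left, inner_add_left, real_inner_smul_left,
      sum_inner, sum_sub_distrib]
    rw [sum_comm]
  have hresidual : ∀ i j, I i j * (r i j - ⟪u i, (V + t • W) j⟫) ^ 2 =
      I i j * (r i j - ⟪u i, V j⟫) ^ 2 - t * (2 * (I i j * (r i j - ⟪u i, V j⟫) * ⟪u i, W j⟫))
        + t ^ 2 * (I i j * ⟪u i, W j⟫ ^ 2) := by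
    intro i j
    simp only [Pi.add_apply, Pi.smul_apply, inner_add_right, real_inner_smul_right]
    ring
  have hreg : ∀ j, ‖(V + t • W) j‖ ^ 2 = ‖V j‖ ^ 2 + t * (2 * ⟪V j, W j⟫) + t ^ 2 * ‖W j‖ ^ 2 := by
    intro j
    rw [Pi.add_apply, Pi.smul_apply, norm_add_sq_real, real_inner_smul_right, norm_smul,
      Real.norm_eq_abs, mul_pow, sq_abs]
    ring
  have hlin : ∀ j, ⟪η j, (V + t • W) j⟫ = ⟪η j, V j⟫ + t * ⟪η j, W j⟫ := by
    intro j
    rw [Pi.add_apply, Pi.smul_apply, inner_add_right, real_inner_smul_right]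
  simp only [perturbedObjective, hresidual, hreg, hlin, hgrad, sum_add_distrib, sum_sub_distrib,
    ← mul_sum]
  ring

lemma perturbedObjectiveGrad_eq_zero_of_forall_le (Vb : Fin M → EuclideanSpace ℝ (Fin d))
    (hmin : ∀ V, perturbedObjective u I r lv η Vb ≤ perturbedObjective u I r lv η V) (j : Fin M) :
    perturbedObjectiveGrad u I r lv η Vb j = 0 := by
  set G := perturbedObjectiveGrad u I r lv η Vb
  have hlin : ∀ W : Fin M → EuclideanSpace ℝ (Fin d), ∑ j, ⟪G j, W j⟫ = 0 := by
    intro W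
    apply eq_zero_of_forall_mul_add_sq_nonneg
    intro t
    have hle := hmin (Vb + t • W)
    rwa [perturbedObjective_add_smul, add_assoc, le_add_iff_nonneg_right] at hle
  have hsingle := hlin (Pi.single j (G j))
  rw [Fintype.sum_eq_single j fun j' hj' => by rw [Pi.single_eq_of_ne hj', inner_zero_right],
    Pi.single_eq_same] at hsingle
  exact inner_self_eq_zero.mp hsingle

lemma perturbedObjectiveGrad_sub (r' : Fin N → Fin M → ℝ) (η' : Fin M → EuclideanSpace ℝ (Fin d))
    (V : Fin M → EuclideanSpace ℝ (Fin d)) (j : Fin M) :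
    perturbedObjectiveGrad u I r lv η V j - perturbedObjectiveGrad u I r' lv η' V j =
      η j - η' j - ∑ i, (I i j * (r i j - r' i j)) • u i := by
  have hratings : ∑ i, (I i j * (r i j - ⟪u i, V j⟫)) • u i
      - ∑ i, (I i j * (r' i j - ⟪u i, V j⟫)) • u i = ∑ i, (I i j * (r i j - r' i j)) • u i := by
    rw [← sum_sub_distrib]
    exact sum_congr rfl fun i _ => by rw [← sub_smul]; ring_nf
  rw [perturbedObjectiveGrad, perturbedObjectiveGrad, ← hratings]
  abel

end

theorem noise_sensitivity_general {d N M : ℕ}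
    (u : Fin N → EuclideanSpace ℝ (Fin d)) (I : Fin N → Fin M → ℝ)
    (r r' : Fin N → Fin M → ℝ) (p : Fin N) (q : Fin M) (Δ : ℝ)
    (hneighbor : ∀ i j, (i, j) ≠ (p, q) → r i j = r' i j)
    (hΔ : |r p q - r' p q| ≤ Δ)
    (hIpq : I p q = 1)
    (hu : ‖u p‖ ≤ 1)
    (lv : ℝ)
    (η η' : Fin M → EuclideanSpace ℝ (Fin d))
    (Vb : Fin M → EuclideanSpace ℝ (Fin d))
    (hmin : ∀ V, perturbedObjective u I r lv η Vb ≤ perturbedObjective u I r lv η V)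
    (hmin' : ∀ V, perturbedObjective u I r' lv η' Vb ≤ perturbedObjective u I r' lv η' V) :
    (∀ j : Fin M, j ≠ q → η j = η' j) ∧
      ‖η q - η' q‖ = |r p q - r' p q| * ‖u p‖ ∧ ‖η q - η' q‖ ≤ Δ := by
  have hdiff (j : Fin M) : η j - η' j = ∑ i, (I i j * (r i j - r' i j)) • u i := by
    have h := perturbedObjectiveGrad_sub u I r lv η r' η' Vb j
    rwa [perturbedObjectiveGrad_eq_zero_of_forall_le u I r lv η Vb hmin,
      perturbedObjectiveGrad_eq_zero_of_forall_le u I r' lv η' Vb hmin', sub_zero, eq_comm,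
      sub_eq_zero] at h
  have hterm (i : Fin N) (j : Fin M) (hij : (i, j) ≠ (p, q)) :
      (I i j * (r i j - r' i j)) • u i = 0 := by
    rw [hneighbor i j hij, sub_self, mul_zero, zero_smul]
  have hq : η q - η' q = (r p q - r' p q) • u p := by
    rw [hdiff, Fintype.sum_eq_single p fun i hi => hterm i q (by simp [hi]), hIpq, one_mul]
  have hnorm : ‖η q - η' q‖ = |r p q - r' p q| * ‖u p‖ := by
    rw [hq, norm_smul, Real.norm_eq_abs]
  refine ⟨fun j hj => ?_, hnorm, ?_⟩
  · rw [← sub_eq_zero, hdiff]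
    exact sum_eq_zero fun i _ => hterm i j (by simp [hj])
  · exact hnorm ▸ (mul_le_of_le_one_right (abs_nonneg _) hu).trans hΔ

theorem noise_sensitivity {d N M : ℕ}
    (u : Fin N → EuclideanSpace ℝ (Fin d)) (I : Fin N → Fin M → ℝ)
    (hI : ∀ i j, I i j = 0 ∨ I i j = 1)
    (r r' : Fin N → Fin M → ℝ) (p : Fin N) (q : Fin M) (Δ : ℝ)
    (hneighbor : ∀ i j, (i, j) ≠ (p, q) → r i j = r' i j)
    (hΔ : |r p q - r' p q| ≤ Δ)
    (hIpq : I p q = 1)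
    (hu : ‖u p‖ ≤ 1)
    (lv : ℝ) (hlv : 0 < lv)
    (η η' : Fin M → EuclideanSpace ℝ (Fin d))
    (Vb : Fin M → EuclideanSpace ℝ (Fin d))
    (hmin : ∀ V, perturbedObjective u I r lv η Vb ≤ perturbedObjective u I r lv η V)
    (hmin' : ∀ V, perturbedObjective u I r' lv η' Vb ≤ perturbedObjective u I r' lv η' V) :
    (∀ j : Fin M, j ≠ q → η j = η' j) ∧
      ‖η q - η' q‖ = |r p q - r' p q| * ‖u p‖ ∧ ‖η q - η' q‖ ≤ Δ :=
  noise_sensitivity_general u I r r' p q Δ hneighbor hΔ hIpq hu lv η η' Vb hmin hmin'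
end
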